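/- Fix 1 ≤ t ≤ T, let Γ be a dense subset of Θ, and let (H_n)_{n∈ℕ} be a sequence of F_{t−1}-measurable ℝ^d-valued random variables in canonical form. Then (H_n)_{n∈ℕ} converges P-almost surely if and only if for every θ ∈ Γ the sequence (⟨H_n, ΔS^θ_t⟩)_{n∈ℕ} converges P-almost surely. -/

import Mathlib

open MeasureTheory Filter Set
open scoped RealInnerProductSpace Topology

/-!
Only the converse needs work. Fix a countable dense `Γ₀ ⊆ Γ`. Since `θ ↦ S^θ` is continuous
along subsequences, an `F_{t-1}`-measurable `G` in canonical form with `⟨G, ΔS^θ_t⟩ = 0` a.s.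
for `θ ∈ Γ₀` has this property for all `θ ∈ Θ`, so `𝔓^Θ_t G = G` and hence `G = 0` a.s.
Candidates for such a `G` come from `F_{t-1}`-measurably chosen subsequences of `(H_n)`
(built coordinatewise from liminfs): if `(H_n)` were unbounded on a non-null set, a limit of
`H_n / |H_n|` along indices with `|H_n| → ∞` would be a unit vector of this kind; if it were
bounded but not convergent, the difference of two distinct subsequential limits would be one.
-/

/-- The cumulative gain `(H · S^θ)_T = ∑_{t=1}^T ⟨H_t, ΔS^θ_t⟩` of a strategy `H`
against the price process `S^θ`. -/
noncomputable def gain {Ω X : Type*} (d T : ℕ)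
    (S : X → ℕ → Ω → EuclideanSpace ℝ (Fin d))
    (H : ℕ → Ω → EuclideanSpace ℝ (Fin d)) (θ : X) (ω : Ω) : ℝ :=
  ∑ t ∈ Finset.Icc 1 T, ⟪H t ω, S θ t ω - S θ (t - 1) ω⟫

/-- A (predictable) trading strategy: `H_t` is `F_{t-1}`-measurable for `1 ≤ t ≤ T`. -/
def IsStrategy {Ω : Type*} (𝓕 : ℕ → MeasurableSpace Ω) (d T : ℕ)
    (H : ℕ → Ω → EuclideanSpace ℝ (Fin d)) : Prop :=
  ∀ t, 1 ≤ t → t ≤ T → StronglyMeasurable[𝓕 (t - 1)] (H t)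

/-- No Robust Arbitrage: any strategy whose terminal gain is a.s. nonnegative in every
model `θ ∈ Θ` has a.s. zero terminal gain in every model `θ ∈ Θ`. -/
def NRA {Ω X : Type*} [MeasurableSpace Ω] (P : Measure Ω)
    (𝓕 : ℕ → MeasurableSpace Ω) (d T : ℕ) (Θ : Set X)
    (S : X → ℕ → Ω → EuclideanSpace ℝ (Fin d)) : Prop :=
  ∀ H : ℕ → Ω → EuclideanSpace ℝ (Fin d), IsStrategy 𝓕 d T H →
    (∀ θ ∈ Θ, ∀ᵐ ω ∂P, 0 ≤ gain d T S H θ ω) →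
    (∀ θ ∈ Θ, ∀ᵐ ω ∂P, gain d T S H θ ω = 0)

section MeasurableSelection

variable {Ω : Type*} [MeasurableSpace Ω]

theorem measurable_apply_index {β : Type*} [MeasurableSpace β] {f : ℕ → Ω → β}
    (hf : ∀ n, Measurable (f n)) {σ : Ω → ℕ} (hσ : Measurable σ) :
    Measurable fun ω => f (σ ω) ω :=
  (measurable_from_prod_countable_left (f := fun p : Ω × ℕ => f p.2 p.1) hf).comp
    (measurable_id.prodMk hσ)

theorem measurableSet_frequently_atTop {p : ℕ → Ω → Prop}
    (hp : ∀ n, MeasurableSet {ω | p n ω}) : MeasurableSet {ω | ∃ᶠ n in atTop, p n ω} := by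
  simp only [frequently_atTop]
  exact measurableSet_setOfPred.2 <| .forall fun a => .exists fun b =>
    measurable_const.and (measurableSet_setOfPred.1 (hp b))

theorem exists_index_gt_and_or_forall (p : ℕ → Prop) (n : ℕ) :
    ∃ k, n < k ∧ (p k ∨ ∀ i, n < i → ¬p i) := by
  by_cases h : ∃ i, n < i ∧ p i
  · obtain ⟨i, hni, hi⟩ := h
    exact ⟨i, hni, Or.inl hi⟩
  · push Not at h
    exact ⟨n + 1, n.lt_succ_self, Or.inr h⟩

open Classical in
/-- The first index after `n` at which `p` holds, or `n + 1` if there is none. -/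
noncomputable def nextIndex (p : ℕ → Prop) (n : ℕ) : ℕ :=
  Nat.find (exists_index_gt_and_or_forall p n)

theorem lt_nextIndex (p : ℕ → Prop) (n : ℕ) : n < nextIndex p n := by
  classical
  exact (Nat.find_spec (exists_index_gt_and_or_forall p n)).1

theorem nextIndex_spec {p : ℕ → Prop} (n : ℕ) (hp : ∃ᶠ k in atTop, p k) :
    p (nextIndex p n) := by
  classical
  obtain ⟨-, h | h⟩ := Nat.find_spec (exists_index_gt_and_or_forall p n)
  · exact h
  · obtain ⟨k, hk, hpk⟩ := frequently_atTop.1 hp (n + 1)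
    exact absurd hpk (h k hk)

theorem measurable_nextIndex {p : Ω → ℕ → Prop} (hp : ∀ k, MeasurableSet {ω | p ω k})
    {n : Ω → ℕ} (hn : Measurable n) : Measurable fun ω => nextIndex (p ω) (n ω) := by
  classical
  refine measurable_find _ fun k => measurableSet_setOfPred.2 ?_
  have hp' : ∀ i, Measurable fun ω => p ω i := fun i => measurableSet_setOfPred.1 (hp i)
  have hlt : ∀ i, Measurable fun ω => n ω < i := fun i =>
    measurableSet_setOfPred.1 (measurableSet_lt hn measurable_const)
  exact (hlt k).and ((hp' k).or (.forall fun i => (hlt i).imp (hp' i).not))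

theorem exists_measurable_subseq_of_frequently {Q : ℕ → Ω → ℕ → Prop}
    (hQ : ∀ j k, MeasurableSet {ω | Q j ω k}) :
    ∃ σ : Ω → ℕ → ℕ, (∀ j, Measurable fun ω => σ ω j) ∧ (∀ ω, StrictMono (σ ω)) ∧
      ∀ ω j, (∃ᶠ k in atTop, Q j ω k) → Q j ω (σ ω j) := by
  let τ : Ω → ℕ → ℕ := fun ω j => Nat.rec 0 (fun j prev => nextIndex (Q j ω) prev) j
  have hτ : ∀ j, Measurable fun ω => τ ω j := by
    intro j
    induction j with
    | zero => exact measurable_const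
    | succ j ih => exact measurable_nextIndex (hQ j) ih
  exact ⟨fun ω j => τ ω (j + 1), fun j => hτ (j + 1),
    fun ω => strictMono_nat_of_lt_succ fun j => lt_nextIndex _ _,
    fun ω j hj => nextIndex_spec _ hj⟩

theorem exists_measurable_subseq_tendsto_of_mapClusterPt {α : Type*} [PseudoMetricSpace α]
    [MeasurableSpace α] [OpensMeasurableSpace α] [SecondCountableTopology α]
    {f : ℕ → Ω → α} (hf : ∀ n, Measurable (f n)) {c : Ω → α} (hc : Measurable c) :
    ∃ σ : Ω → ℕ → ℕ, (∀ j, Measurable fun ω => σ ω j) ∧ (∀ ω, StrictMono (σ ω)) ∧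
      ∀ ω, MapClusterPt (c ω) atTop (fun n => f n ω) →
        Tendsto (fun j => f (σ ω j) ω) atTop (𝓝 (c ω)) := by
  obtain ⟨σ, hσm, hσmono, hσ⟩ := exists_measurable_subseq_of_frequently
    (Q := fun j ω k => dist (f k ω) (c ω) < 1 / (j + 1))
    fun j k => measurableSet_lt ((hf k).dist hc) measurable_const
  refine ⟨σ, hσm, hσmono, fun ω hω => tendsto_iff_dist_tendsto_zero.2 ?_⟩
  refine squeeze_zero (fun _ => dist_nonneg) (fun j => (hσ ω j ?_).le)
    tendsto_one_div_add_atTop_nhds_zero_nat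
  exact hω.frequently (Metric.ball_mem_nhds _ (by positivity))

theorem exists_measurable_subseq_tendsto_coord {ι : Type*} [Fintype ι]
    {f : ℕ → Ω → EuclideanSpace ℝ ι} (hf : ∀ n, Measurable (f n)) (s : Finset ι) :
    ∃ σ : Ω → ℕ → ℕ, (∀ j, Measurable fun ω => σ ω j) ∧ (∀ ω, StrictMono (σ ω)) ∧
      ∃ c : ι → Ω → ℝ, (∀ i, Measurable (c i)) ∧ ∀ ω, BddAbove (range fun n => ‖f n ω‖) →
        ∀ i ∈ s, Tendsto (fun j => f (σ ω j) ω i) atTop (𝓝 (c i ω)) := by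
  classical
  induction s using Finset.induction_on with
  | empty =>
    exact ⟨fun _ j => j, fun _ => measurable_const, fun _ => strictMono_id, fun _ _ => 0,
      fun _ => measurable_const, by simp⟩
  | insert i s hi ih =>
    obtain ⟨σ, hσm, hσmono, c, hcm, hc⟩ := ih
    have hg : ∀ k, Measurable fun ω => f (σ ω k) ω i := fun k =>
      measurable_apply_index (fun n => (PiLp.continuous_apply 2 _ i).measurable.comp (hf n))
        (hσm k)
    obtain ⟨ρ, hρm, hρmono, hρ⟩ :=
      exists_measurable_subseq_tendsto_of_mapClusterPt hg (Measurable.liminf hg)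
    refine ⟨fun ω j => σ ω (ρ ω j), fun j => measurable_apply_index hσm (hρm j),
      fun ω => (hσmono ω).comp (hρmono ω),
      Function.update c i fun ω => liminf (fun k => f (σ ω k) ω i) atTop, fun i' => ?_,
      fun ω hω i' hi' => ?_⟩
    · rcases eq_or_ne i' i with rfl | hne
      · simpa using Measurable.liminf hg
      · simpa [hne] using hcm i'
    rcases eq_or_ne i' i with rfl | hne
    · obtain ⟨C, hC⟩ := hω
      have hbd : ∀ k, |f (σ ω k) ω i'| ≤ C := fun k =>
        (PiLp.norm_apply_le _ i').trans (hC ⟨_, rfl⟩)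
      simpa using hρ ω (isLeast_mapClusterPt_liminf
        (isBoundedUnder_of ⟨C, fun k => (abs_le.1 (hbd k)).2⟩).isCoboundedUnder_ge
        (isBoundedUnder_of ⟨-C, fun k => (abs_le.1 (hbd k)).1⟩)).1
    · simpa [hne, Function.comp_def] using
        (hc ω hω i' (Finset.mem_of_mem_insert_of_ne hi' hne)).comp (hρmono ω).tendsto_atTop

theorem exists_measurable_subseq_tendsto_of_bddAbove {ι : Type*} [Fintype ι]
    {f : ℕ → Ω → EuclideanSpace ℝ ι} (hf : ∀ n, Measurable (f n)) :
    ∃ σ : Ω → ℕ → ℕ, (∀ j, Measurable fun ω => σ ω j) ∧ (∀ ω, StrictMono (σ ω)) ∧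
      ∃ G : Ω → EuclideanSpace ℝ ι, Measurable G ∧ ∀ ω, BddAbove (range fun n => ‖f n ω‖) →
        Tendsto (fun j => f (σ ω j) ω) atTop (𝓝 (G ω)) := by
  obtain ⟨σ, hσm, hσmono, c, hcm, hc⟩ := exists_measurable_subseq_tendsto_coord hf Finset.univ
  refine ⟨σ, hσm, hσmono, fun ω => WithLp.toLp 2 fun i => c i ω,
    (PiLp.continuous_toLp 2 _).measurable.comp (measurable_pi_lambda _ hcm), fun ω hω => ?_⟩
  simpa [Function.comp_def] using ((PiLp.continuous_toLp 2 _).tendsto _).comp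
    (tendsto_pi_nhds.2 fun i => hc ω hω i (Finset.mem_univ i))

end MeasurableSelection

theorem frequently_le_of_not_bddAbove_range {α : Type*} [LinearOrder α] {u : ℕ → α}
    (hu : ¬BddAbove (range u)) (C : α) : ∃ᶠ n in atTop, C ≤ u n := by
  refine fun h => hu (IsBoundedUnder.bddAbove_range (isBoundedUnder_of_eventually_le (a := C) ?_))
  exact h.mono fun n hn => (not_le.1 hn).le

section InnerProductSpace

variable {E : Type*} [NormedAddCommGroup E] [InnerProductSpace ℝ E]

theorem inner_eq_of_tendsto_subseq {x : ℕ → E} {φ : ℕ → ℕ} (hφ : Tendsto φ atTop atTop)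
    {y : E} (hy : Tendsto (fun j => x (φ j)) atTop (𝓝 y)) {v : E} {c : ℝ}
    (hc : Tendsto (fun n => ⟪x n, v⟫) atTop (𝓝 c)) : ⟪y, v⟫ = c :=
  tendsto_nhds_unique (hy.inner tendsto_const_nhds) (hc.comp hφ)

theorem inner_eq_zero_of_tendsto_normalize {x : ℕ → E}
    (hx : Tendsto (fun n => ‖x n‖) atTop atTop) {y : E}
    (hy : Tendsto (fun n => ‖x n‖⁻¹ • x n) atTop (𝓝 y)) {v : E} {c : ℝ}
    (hc : Tendsto (fun n => ⟪x n, v⟫) atTop (𝓝 c)) : ⟪y, v⟫ = 0 := by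
  have h := (tendsto_inv_atTop_zero.comp hx).mul hc
  rw [zero_mul] at h
  refine tendsto_nhds_unique (hy.inner tendsto_const_nhds) ?_
  simpa only [real_inner_smul_left, Function.comp_def] using h

theorem norm_eq_one_of_tendsto_normalize {x : ℕ → E} (hx : ∀ n, x n ≠ 0) {y : E}
    (hy : Tendsto (fun n => ‖x n‖⁻¹ • x n) atTop (𝓝 y)) : ‖y‖ = 1 := by
  refine tendsto_nhds_unique hy.norm ?_
  simp only [norm_smul, norm_inv, norm_norm, inv_mul_cancel₀ (norm_ne_zero_iff.2 (hx _))]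
  exact tendsto_const_nhds

end InnerProductSpace

/-- In the application `W ω = ker 𝔓^Θ_t(ω)` (canonical form) and `v θ = ΔS^θ_t` for `θ` in a
countable dense subset of `Γ`. -/
def SeparatesMeasurableSections {Ω E : Type*} [NormedAddCommGroup E] [InnerProductSpace ℝ E]
    [MeasurableSpace E] {κ : Type*} (m : MeasurableSpace Ω) (l : Filter Ω)
    (W : Ω → Submodule ℝ E) (v : κ → Ω → E) : Prop :=
  ∀ G : Ω → E, Measurable[m] G → (∀ᶠ ω in l, G ω ∈ W ω ∧ ∀ k, ⟪G ω, v k ω⟫ = 0) →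
    ∀ᶠ ω in l, G ω = 0

namespace SeparatesMeasurableSections

variable {Ω ι κ : Type*} [Fintype ι] {m : MeasurableSpace Ω} {l : Filter Ω}
  {W : Ω → Submodule ℝ (EuclideanSpace ℝ ι)} {v : κ → Ω → EuclideanSpace ℝ ι}

theorem eventually_imp_eq_zero (hsep : SeparatesMeasurableSections m l W v) {A : Set Ω}
    (hA : MeasurableSet A) {G : Ω → EuclideanSpace ℝ ι} (hG : Measurable G)
    (hGA : ∀ᶠ ω in l, ω ∈ A → G ω ∈ W ω ∧ ∀ k, ⟪G ω, v k ω⟫ = 0) :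
    ∀ᶠ ω in l, ω ∈ A → G ω = 0 := by
  refine (hsep _ (hG.indicator hA) (hGA.mono fun ω h => ?_)).mono fun ω h hω => ?_
  · by_cases hω : ω ∈ A
    · simpa [indicator_of_mem hω] using h hω
    · simp [indicator_of_notMem hω]
  · simpa [indicator_of_mem hω] using h

variable {H : ℕ → Ω → EuclideanSpace ℝ ι}

theorem eventually_bddAbove_norm (hsep : SeparatesMeasurableSections m l W v)
    (hH : ∀ n, Measurable (H n)) (hW : ∀ᶠ ω in l, ∀ n, H n ω ∈ W ω)
    (hconv : ∀ᶠ ω in l, ∀ k, ∃ c, Tendsto (fun n => ⟪H n ω, v k ω⟫) atTop (𝓝 c)) :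
    ∀ᶠ ω in l, BddAbove (range fun n => ‖H n ω‖) := by
  set B := {ω | ¬BddAbove (range fun n => ‖H n ω‖)}
  have hB : MeasurableSet B := (measurableSet_bddAbove_range fun n => (hH n).norm).compl
  obtain ⟨ρ, hρm, hρmono, hρ⟩ := exists_measurable_subseq_of_frequently
    (Q := fun j ω k => (j : ℝ) + 1 ≤ ‖H k ω‖)
    fun j k => measurableSet_le measurable_const (hH k).norm
  have hHρ : ∀ j, Measurable fun ω => H (ρ ω j) ω := fun j => measurable_apply_index hH (hρm j)
  obtain ⟨σ, -, hσmono, G, hGm, hG⟩ := exists_measurable_subseq_tendsto_of_bddAbove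
    (f := fun j ω => ‖H (ρ ω j) ω‖⁻¹ • H (ρ ω j) ω) fun j => (hHρ j).norm.inv.smul (hHρ j)
  have hGlim : ∀ ω, Tendsto (fun j => ‖H (ρ ω (σ ω j)) ω‖⁻¹ • H (ρ ω (σ ω j)) ω) atTop
      (𝓝 (G ω)) := by
    refine fun ω => hG ω ⟨1, ?_⟩
    rintro _ ⟨j, rfl⟩
    simpa [norm_smul] using inv_mul_le_one_of_le₀ le_rfl (norm_nonneg (H (ρ ω j) ω))
  have hgrow : ∀ ω ∈ B, ∀ j : ℕ, (j : ℝ) + 1 ≤ ‖H (ρ ω (σ ω j)) ω‖ := fun ω hω j =>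
    (add_le_add_left (Nat.cast_le.2 (hσmono ω).le_apply) 1).trans
      (hρ ω _ (frequently_le_of_not_bddAbove_range hω _))
  have hzero := hsep.eventually_imp_eq_zero hB hGm <| by
    filter_upwards [hW, hconv] with ω hWω hcω hω
    refine ⟨(W ω).closed_of_finiteDimensional.mem_of_tendsto (hGlim ω)
      (.of_forall fun j => (W ω).smul_mem _ (hWω _)), fun k => ?_⟩
    obtain ⟨c, hc⟩ := hcω k
    refine inner_eq_zero_of_tendsto_normalize (tendsto_atTop_mono (hgrow ω hω)
      (tendsto_atTop_add_const_right atTop 1 tendsto_natCast_atTop_atTop)) (hGlim ω)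
      (hc.comp ((hρmono ω).comp (hσmono ω)).tendsto_atTop)
  filter_upwards [hzero] with ω hω
  by_contra hB
  have hnorm := norm_eq_one_of_tendsto_normalize (fun j hj => ?_) (hGlim ω)
  · simp [hω hB] at hnorm
  · have := hgrow ω hB j
    rw [hj, norm_zero] at this
    linarith [(j.cast_nonneg : (0 : ℝ) ≤ j)]

theorem eventually_norm_sub_lt (hsep : SeparatesMeasurableSections m l W v)
    (hH : ∀ n, Measurable (H n)) (hW : ∀ᶠ ω in l, ∀ n, H n ω ∈ W ω)
    (hconv : ∀ᶠ ω in l, ∀ k, ∃ c, Tendsto (fun n => ⟪H n ω, v k ω⟫) atTop (𝓝 c))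
    {σ : Ω → ℕ → ℕ} (hσ : ∀ ω, StrictMono (σ ω)) {G : Ω → EuclideanSpace ℝ ι}
    (hGm : Measurable G) (hG : ∀ ω, BddAbove (range fun n => ‖H n ω‖) →
      Tendsto (fun j => H (σ ω j) ω) atTop (𝓝 (G ω))) {ε : ℝ} (hε : 0 < ε) :
    ∀ᶠ ω in l, BddAbove (range fun n => ‖H n ω‖) → ∀ᶠ n in atTop, ‖H n ω - G ω‖ < ε := by
  set F := {ω | BddAbove (range fun n => ‖H n ω‖) ∧ ∃ᶠ n in atTop, ε ≤ ‖H n ω - G ω‖}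
  have hF : MeasurableSet F := (measurableSet_bddAbove_range fun n => (hH n).norm).inter
    (measurableSet_frequently_atTop fun n => measurableSet_le measurable_const
      ((hH n).sub hGm).norm)
  obtain ⟨τ, hτm, hτmono, hτ⟩ := exists_measurable_subseq_of_frequently
    (Q := fun _ ω n => ε ≤ ‖H n ω - G ω‖)
    fun _ n => measurableSet_le measurable_const ((hH n).sub hGm).norm
  obtain ⟨σ', -, hσ'mono, G', hG'm, hG'⟩ := exists_measurable_subseq_tendsto_of_bddAbove
    (f := fun j ω => H (τ ω j) ω) fun j => measurable_apply_index hH (hτm j)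
  have hG'lim : ∀ ω ∈ F, Tendsto (fun j => H (τ ω (σ' ω j)) ω) atTop (𝓝 (G' ω)) :=
    fun ω hω => hG' ω (hω.1.mono (range_comp_subset_range (τ ω) fun n => ‖H n ω‖))
  have hzero := hsep.eventually_imp_eq_zero hF (hG'm.sub hGm) <| by
    filter_upwards [hW, hconv] with ω hWω hcω hω
    have hmem : ∀ {φ : ℕ → ℕ} {y}, Tendsto (fun j => H (φ j) ω) atTop (𝓝 y) → y ∈ W ω :=
      fun hy => (W ω).closed_of_finiteDimensional.mem_of_tendsto hy (.of_forall fun _ => hWω _)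
    have hτσ' := ((hτmono ω).comp (hσ'mono ω)).tendsto_atTop
    refine ⟨sub_mem (hmem (hG'lim ω hω)) (hmem (hG ω hω.1)), fun k => ?_⟩
    obtain ⟨c, hc⟩ := hcω k
    rw [Pi.sub_apply, inner_sub_left, inner_eq_of_tendsto_subseq hτσ' (hG'lim ω hω) hc,
      inner_eq_of_tendsto_subseq (hσ ω).tendsto_atTop (hG ω hω.1) hc, sub_self]
  filter_upwards [hzero] with ω hω hbdd
  refine (not_frequently.1 fun hfar => hε.not_ge ?_).mono fun n hn => not_le.1 hn
  have hfar' : ∀ j, ε ≤ ‖H (τ ω (σ' ω j)) ω - G ω‖ := fun j => hτ ω _ hfar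
  have hlim := ((hG'lim ω ⟨hbdd, hfar⟩).sub_const (G ω)).norm
  simpa [sub_eq_zero.1 (hω ⟨hbdd, hfar⟩)] using ge_of_tendsto' hlim hfar'

variable [CountableInterFilter l] [Countable κ]

theorem eventually_exists_tendsto (hsep : SeparatesMeasurableSections m l W v)
    (hH : ∀ n, Measurable (H n)) (hW : ∀ᶠ ω in l, ∀ n, H n ω ∈ W ω)
    (hconv : ∀ k, ∀ᶠ ω in l, ∃ c, Tendsto (fun n => ⟪H n ω, v k ω⟫) atTop (𝓝 c)) :
    ∀ᶠ ω in l, ∃ L, Tendsto (fun n => H n ω) atTop (𝓝 L) := by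
  rw [← eventually_countable_forall] at hconv
  obtain ⟨σ, -, hσmono, G, hGm, hG⟩ := exists_measurable_subseq_tendsto_of_bddAbove hH
  have hclose : ∀ j : ℕ, ∀ᶠ ω in l, BddAbove (range fun n => ‖H n ω‖) →
      ∀ᶠ n in atTop, ‖H n ω - G ω‖ < 1 / (j + 1) := fun j =>
    hsep.eventually_norm_sub_lt hH hW hconv hσmono hGm hG (by positivity)
  filter_upwards [hsep.eventually_bddAbove_norm hH hW hconv,
    eventually_countable_forall.2 hclose] with ω hbdd hω
  refine ⟨G ω, Metric.tendsto_nhds.2 fun ε hε => ?_⟩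
  obtain ⟨j, hj⟩ := exists_nat_one_div_lt hε
  exact (hω j hbdd).mono fun n hn => by rw [dist_eq_norm]; linarith

end SeparatesMeasurableSections

theorem ae_inner_eq_zero_of_mem_closure {X Ω E : Type*} [TopologicalSpace X]
    [FrechetUrysohnSpace X] [MeasurableSpace Ω] {P : Measure Ω} [NormedAddCommGroup E]
    [InnerProductSpace ℝ E] {Θ Γ₀ : Set X} {Y : X → Ω → E}
    (hY : ∀ (θs : ℕ → X) (θ : X), (∀ n, θs n ∈ Θ) → θ ∈ Θ → Tendsto θs atTop (𝓝 θ) →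
      ∃ φ : ℕ → ℕ, StrictMono φ ∧ ∀ᵐ ω ∂P, Tendsto (fun k => Y (θs (φ k)) ω) atTop (𝓝 (Y θ ω)))
    (hΓ₀ : Γ₀ ⊆ Θ) {G : Ω → E} (hG : ∀ θ ∈ Γ₀, ∀ᵐ ω ∂P, ⟪G ω, Y θ ω⟫ = 0) {θ : X}
    (hθ : θ ∈ Θ) (hθΓ₀ : θ ∈ closure Γ₀) : ∀ᵐ ω ∂P, ⟪G ω, Y θ ω⟫ = 0 := by
  obtain ⟨θs, hθsΓ₀, hθs⟩ := mem_closure_iff_seq_limit.1 hθΓ₀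
  obtain ⟨φ, -, hφ⟩ := hY θs θ (fun n => hΓ₀ (hθsΓ₀ n)) hθ hθs
  filter_upwards [hφ, ae_all_iff.2 fun k => hG _ (hθsΓ₀ (φ k))] with ω hω hzero
  exact tendsto_nhds_unique (tendsto_const_nhds.inner hω) (by simp [hzero])

theorem separatesMeasurableSections_ker {Ω X ι : Type*} [Fintype ι] {m : MeasurableSpace Ω}
    [MeasurableSpace Ω] {P : Measure Ω} [TopologicalSpace X] [FrechetUrysohnSpace X]
    {Θ Γ₀ : Set X} {Y : X → Ω → EuclideanSpace ℝ ι}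
    (hY : ∀ (θs : ℕ → X) (θ : X), (∀ n, θs n ∈ Θ) → θ ∈ Θ → Tendsto θs atTop (𝓝 θ) →
      ∃ φ : ℕ → ℕ, StrictMono φ ∧ ∀ᵐ ω ∂P, Tendsto (fun k => Y (θs (φ k)) ω) atTop (𝓝 (Y θ ω)))
    (hΓ₀ : Γ₀ ⊆ Θ) (hΘ : Θ ⊆ closure Γ₀)
    {Proj : Ω → EuclideanSpace ℝ ι →L[ℝ] EuclideanSpace ℝ ι}
    (hProj : ∀ h : Ω → EuclideanSpace ℝ ι, StronglyMeasurable[m] h →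
      ((∀ θ ∈ Θ, ∀ᵐ ω ∂P, ⟪h ω, Y θ ω⟫ = 0) ↔ ∀ᵐ ω ∂P, Proj ω (h ω) = h ω)) :
    SeparatesMeasurableSections m (ae P) (fun ω => (Proj ω).ker) fun (θ : Γ₀) => Y θ := by
  intro G hGm hG
  have hGΘ : ∀ θ ∈ Θ, ∀ᵐ ω ∂P, ⟪G ω, Y θ ω⟫ = 0 := fun θ hθ =>
    ae_inner_eq_zero_of_mem_closure hY hΓ₀ (fun θ' hθ' => hG.mono fun ω hω => hω.2 ⟨θ', hθ'⟩)
      hθ (hΘ hθ)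
  filter_upwards [(hProj G hGm.stronglyMeasurable).1 hGΘ, hG] with ω hfix hω
  rw [← hfix]
  exact hω.1

theorem canonical_converges_iff_general
    {Ω : Type*} [mΩ : MeasurableSpace Ω] (P : Measure Ω)
    {X : Type*} [MetricSpace X] [TopologicalSpace.SeparableSpace X]
    (d T : ℕ) (𝓕 : ℕ → MeasurableSpace Ω) (Θ : Set X)
    (S : X → ℕ → Ω → EuclideanSpace ℝ (Fin d))
    (hS_cont : ∀ (θs : ℕ → X) (θ : X), (∀ n, θs n ∈ Θ) → θ ∈ Θ →
      Tendsto θs atTop (𝓝 θ) → ∃ φ : ℕ → ℕ, StrictMono φ ∧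
        ∀ t ≤ T, ∀ᵐ ω ∂P, Tendsto (fun k => S (θs (φ k)) t ω) atTop (𝓝 (S θ t ω)))
    (t : ℕ) (htT : t ≤ T)
    (Γ : Set X) (hΓ_sub : Γ ⊆ Θ) (hΓ_dense : Θ ⊆ closure Γ)
    (Proj : Ω → EuclideanSpace ℝ (Fin d) →L[ℝ] EuclideanSpace ℝ (Fin d))
    (hProj_char : ∀ h : Ω → EuclideanSpace ℝ (Fin d), StronglyMeasurable[𝓕 (t - 1)] h →
      ((∀ θ ∈ Θ, ∀ᵐ ω ∂P, ⟪h ω, S θ t ω - S θ (t - 1) ω⟫ = 0) ↔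
        ∀ᵐ ω ∂P, Proj ω (h ω) = h ω))
    (H : ℕ → Ω → EuclideanSpace ℝ (Fin d))
    (hH_meas : ∀ n, StronglyMeasurable[𝓕 (t - 1)] (H n))
    (hH_canon : ∀ n, ∀ᵐ ω ∂P, H n ω - Proj ω (H n ω) = H n ω) :
    (∀ᵐ ω ∂P, ∃ L : EuclideanSpace ℝ (Fin d),
        Tendsto (fun n => H n ω) atTop (𝓝 L)) ↔
      ∀ θ ∈ Γ, ∀ᵐ ω ∂P, ∃ l : ℝ,
        Tendsto (fun n => ⟪H n ω, S θ t ω - S θ (t - 1) ω⟫) atTop (𝓝 l) := by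
  refine ⟨fun hconv θ _ => hconv.mono fun ω ⟨L, hL⟩ => ⟨_, hL.inner tendsto_const_nhds⟩,
    fun hconv => ?_⟩
  obtain ⟨Γ₀, hΓ₀Γ, hΓ₀, hΓΓ₀⟩ :=
    (TopologicalSpace.IsSeparable.of_separableSpace Γ).exists_countable_dense_subset
  have : Countable Γ₀ := hΓ₀.to_subtype
  have hΔS : ∀ (θs : ℕ → X) (θ : X), (∀ n, θs n ∈ Θ) → θ ∈ Θ → Tendsto θs atTop (𝓝 θ) →
      ∃ φ : ℕ → ℕ, StrictMono φ ∧ ∀ᵐ ω ∂P, Tendsto (fun k => S (θs (φ k)) t ω -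
        S (θs (φ k)) (t - 1) ω) atTop (𝓝 (S θ t ω - S θ (t - 1) ω)) := by
    intro θs θ hθs hθ hlim
    obtain ⟨φ, hφ, hS⟩ := hS_cont θs θ hθs hθ hlim
    exact ⟨φ, hφ, by filter_upwards [hS t htT, hS (t - 1) (by omega)] with ω h h' using h.sub h'⟩
  have hsep := separatesMeasurableSections_ker hΔS (hΓ₀Γ.trans hΓ_sub)
    (fun θ hθ => closure_minimal hΓΓ₀ isClosed_closure (hΓ_dense hθ)) hProj_char
  exact hsep.eventually_exists_tendsto (fun n => (hH_meas n).measurable)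
    (ae_all_iff.2 fun n => (hH_canon n).mono fun ω h => sub_eq_self.1 h)
    fun θ => hconv θ (hΓ₀Γ θ.2)

/-- **Convergence of canonical-form sequences (Lemma 3.2 (ii)).**
Fix `1 ≤ t ≤ T` and a dense subset `Γ` of `Θ`, and let `(H_n)` be a sequence of
`F_{t-1}`-measurable random vectors in canonical form.  Then `(H_n)` converges a.s. iff
for every `θ ∈ Γ` the sequence `(⟨H_n, ΔS^θ_t⟩)` converges a.s. -/
theorem canonical_converges_iff
    {Ω : Type*} [mΩ : MeasurableSpace Ω] (P : Measure Ω) [IsProbabilityMeasure P]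
    {X : Type*} [MetricSpace X] [TopologicalSpace.SeparableSpace X]
    (d T : ℕ) (hd : 1 ≤ d) (hT : 1 ≤ T)
    (𝓕 : ℕ → MeasurableSpace Ω) (h𝓕_mono : Monotone 𝓕) (h𝓕_le : ∀ t, 𝓕 t ≤ mΩ)
    (h𝓕_null : ∀ N : Set Ω, P N = 0 → MeasurableSet[𝓕 0] N)
    (Θ : Set X) (hΘ_closed : IsClosed Θ) (hΘ_ne : Θ.Nonempty)
    (S : X → ℕ → Ω → EuclideanSpace ℝ (Fin d))
    (hS_adapted : ∀ θ ∈ Θ, ∀ t ≤ T, StronglyMeasurable[𝓕 t] (S θ t))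
    (hS_cont : ∀ (θs : ℕ → X) (θ : X), (∀ n, θs n ∈ Θ) → θ ∈ Θ →
      Tendsto θs atTop (𝓝 θ) → ∃ φ : ℕ → ℕ, StrictMono φ ∧
        ∀ t ≤ T, ∀ᵐ ω ∂P, Tendsto (fun k => S (θs (φ k)) t ω) atTop (𝓝 (S θ t ω)))
    (t : ℕ) (ht1 : 1 ≤ t) (htT : t ≤ T)
    (Γ : Set X) (hΓ_sub : Γ ⊆ Θ) (hΓ_dense : Θ ⊆ closure Γ)
    (Proj : Ω → EuclideanSpace ℝ (Fin d) →L[ℝ] EuclideanSpace ℝ (Fin d))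
    (hProj_meas : ∀ x, Measurable[𝓕 (t - 1)] fun ω => Proj ω x)
    (hProj_idem : ∀ ω, (Proj ω).comp (Proj ω) = Proj ω)
    (hProj_selfadj : ∀ ω x y, ⟪Proj ω x, y⟫ = ⟪x, Proj ω y⟫)
    (hProj_char : ∀ h : Ω → EuclideanSpace ℝ (Fin d), StronglyMeasurable[𝓕 (t - 1)] h →
      ((∀ θ ∈ Θ, ∀ᵐ ω ∂P, ⟪h ω, S θ t ω - S θ (t - 1) ω⟫ = 0) ↔
        ∀ᵐ ω ∂P, Proj ω (h ω) = h ω))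
    (H : ℕ → Ω → EuclideanSpace ℝ (Fin d))
    (hH_meas : ∀ n, StronglyMeasurable[𝓕 (t - 1)] (H n))
    (hH_canon : ∀ n, ∀ᵐ ω ∂P, H n ω - Proj ω (H n ω) = H n ω) :
    (∀ᵐ ω ∂P, ∃ L : EuclideanSpace ℝ (Fin d),
        Tendsto (fun n => H n ω) atTop (𝓝 L)) ↔
      ∀ θ ∈ Γ, ∀ᵐ ω ∂P, ∃ l : ℝ,
        Tendsto (fun n => ⟪H n ω, S θ t ω - S θ (t - 1) ω⟫) atTop (𝓝 l) :=
  canonical_converges_iff_general (mΩ := mΩ) P d T 𝓕 Θ S hS_cont t htT Γ hΓ_sub hΓ_dense Proj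
    hProj_char H hH_meas hH_canon
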